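/- arXiv:2210.02341 — 3 statements merged into one kernel-verified Lean document; each statement's English description precedes it below -/
import Mathlib

section
/- Let N, M ≥ 1, let D : ℝ^N → ℝ^M be a linear map, let h : ℝ^N → ℝ and f : ℝ^N → (−∞,+∞] be measurable with 0 < ∫_{ℝ^N} exp(−h(x)−f(x)) dx < ∞, and let g : ℝ^M → ℝ be continuous with exp(−g) bounded. Let (k_η)_{η>0} be a family of jointly measurable functions k_η : ℝ^M × ℝ^M → [0,∞) such that for every η > 0 and v ∈ ℝ^M, z ↦ k_η(v,z) is a probability density with respect to Lebesgue measure, and such that for every v ∈ ℝ^M the probability measures with density k_η(v,·) converge weakly to the Dirac measure δ_v as η → 0⁺. Let π be the probability measure on ℝ^N with density proportional to x ↦ exp(−h(x)−f(x)−g(Dx)), and for η > 0 let π_η be the probability measure on ℝ^N with density proportional to x ↦ exp(−h(x)−f(x)) ∫_{ℝ^M} exp(−g(z)) k_η(Dx,z) dz. Then the total variation distance ‖π − π_η‖_TV tends to 0 as η → 0⁺. -/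
open MeasureTheory Filter Topology

/-- AXDA marginal convergence (Proposition 2.1): if for every `v` the probability
densities `k_η(v,·)` converge weakly to `δ_v` as `η → 0⁺`, then the normalized
AXDA marginal `π_η`, with density proportional to
`exp(−h−f) ∫ exp(−g(z)) k_η(Dx,z) dz`, converges to `π` (density proportional to
`exp(−h−f−g∘D)`) in total variation. Here `f` takes values in `(−∞,∞]`, encoded as
an `EReal`-valued function never equal to `⊥`, with `exp(−f(x))` interpreted as `0`
when `f(x) = ⊤`, and the total variation distance is the supremum over measurable
sets of the difference of the measures. -/
theorem stmt0 (N M : ℕ) (hN : 1 ≤ N) (hM : 1 ≤ M)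
    (D : EuclideanSpace ℝ (Fin N) →ₗ[ℝ] EuclideanSpace ℝ (Fin M))
    (h : EuclideanSpace ℝ (Fin N) → ℝ) (hh : Measurable h)
    (f : EuclideanSpace ℝ (Fin N) → EReal) (hf : Measurable f)
    (hfbot : ∀ x, f x ≠ ⊥)
    (ef : EuclideanSpace ℝ (Fin N) → ℝ)
    (hef : ∀ x, ef x = Real.exp (-h x) *
      (if f x = ⊤ then 0 else Real.exp (-(f x).toReal)))
    (hint : Integrable ef) (hpos : 0 < ∫ x, ef x)
    (g : EuclideanSpace ℝ (Fin M) → ℝ) (hg : Continuous g)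
    (hgb : ∃ C, ∀ z, Real.exp (-g z) ≤ C)
    (k : ℝ → EuclideanSpace ℝ (Fin M) → EuclideanSpace ℝ (Fin M) → ℝ)
    (hkmeas : ∀ η : ℝ, 0 < η → Measurable (Function.uncurry (k η)))
    (hknn : ∀ η : ℝ, 0 < η → ∀ v u, 0 ≤ k η v u)
    (hkint : ∀ η : ℝ, 0 < η → ∀ v, Integrable (k η v))
    (hkprob : ∀ η : ℝ, 0 < η → ∀ v, ∫ u, k η v u = 1)
    (hkweak : ∀ v, ∀ φ : BoundedContinuousFunction (EuclideanSpace ℝ (Fin M)) ℝ,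
        Tendsto (fun η => ∫ u, φ u * k η v u) (nhdsWithin 0 (Set.Ioi 0)) (nhds (φ v)))
    (p : EuclideanSpace ℝ (Fin N) → ℝ)
    (hp : ∀ x, p x = ef x * Real.exp (-g (D x)))
    (pe : ℝ → EuclideanSpace ℝ (Fin N) → ℝ)
    (hpe : ∀ η x, pe η x = ef x * ∫ u, Real.exp (-g u) * k η (D x) u)
    (π : Measure (EuclideanSpace ℝ (Fin N)))
    (hπ : π = (∫⁻ x, ENNReal.ofReal (p x))⁻¹ •
        volume.withDensity fun x => ENNReal.ofReal (p x))
    (πe : ℝ → Measure (EuclideanSpace ℝ (Fin N)))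
    (hπe : ∀ η, πe η = (∫⁻ x, ENNReal.ofReal (pe η x))⁻¹ •
        volume.withDensity fun x => ENNReal.ofReal (pe η x)) :
    Tendsto (fun η => ⨆ A : {A : Set (EuclideanSpace ℝ (Fin N)) // MeasurableSet A},
        |(π A.1).toReal - (πe η A.1).toReal|)
      (nhdsWithin 0 (Set.Ioi 0)) (nhds 0) := by

  obtain ⟨C, hC⟩ := hgb
  have hexp_nonneg : ∀ z, 0 ≤ Real.exp (-g z) := fun z => (Real.exp_pos _).le
  have hef_nonneg : ∀ x, 0 ≤ ef x := by
    intro x; rw [hef]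
    refine mul_nonneg (Real.exp_pos _).le ?_
    split_ifs
    · exact le_refl _
    · exact (Real.exp_pos _).le
  have hef_meas : Measurable ef := by
    have hrw : ef = fun x => Real.exp (-h x) *
        (if f x = ⊤ then 0 else Real.exp (-(f x).toReal)) := funext hef
    rw [hrw]
    refine (hh.neg.exp).mul (Measurable.ite ?_ measurable_const hf.ereal_toReal.neg.exp)
    exact hf (measurableSet_singleton ⊤)
  have hDc : Continuous D := D.continuous_of_finiteDimensional
  have hp_nonneg : ∀ x, 0 ≤ p x := fun x => by
    rw [hp]; exact mul_nonneg (hef_nonneg x) (hexp_nonneg _)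
  have hp_le : ∀ x, p x ≤ C * ef x := fun x => by
    rw [hp, mul_comm C (ef x)]
    exact mul_le_mul_of_nonneg_left (hC _) (hef_nonneg x)
  have hp_meas : Measurable p := by
    have hrw : p = fun x => ef x * Real.exp (-g (D x)) := funext hp
    rw [hrw]
    exact hef_meas.mul (Real.continuous_exp.comp ((hg.comp hDc).neg)).measurable
  have hp_int : Integrable p := by
    refine (hint.const_mul C).mono' hp_meas.aestronglyMeasurable ?_
    filter_upwards with x
    rw [Real.norm_eq_abs, abs_of_nonneg (hp_nonneg x)]
    exact hp_le x
  set Z := ∫ x, p x with hZdef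
  have hZnn : 0 ≤ Z := integral_nonneg hp_nonneg
  have hZpos : 0 < Z := by
    rcases hZnn.lt_or_eq with h' | h'
    · exact h'
    · exfalso
      have hp0 : p =ᵐ[volume] 0 :=
        (integral_eq_zero_iff_of_nonneg hp_nonneg hp_int).mp h'.symm
      have hef0 : ef =ᵐ[volume] 0 := by
        filter_upwards [hp0] with x hx
        have h2 : ef x * Real.exp (-g (D x)) = 0 := by rw [← hp x]; exact hx
        rcases mul_eq_zero.mp h2 with h3 | h3
        · exact h3
        · exact absurd h3 (Real.exp_ne_zero _)
      have : ∫ x, ef x = 0 := integral_eq_zero_of_ae hef0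
      exact hpos.ne' this
  -- the bounded continuous function exp ∘ (-g)
  let φ : BoundedContinuousFunction (EuclideanSpace ℝ (Fin M)) ℝ :=
    BoundedContinuousFunction.mkOfBound ⟨fun z => Real.exp (-g z), Real.continuous_exp.comp hg.neg⟩
      C (fun x y => by
        simp only [ContinuousMap.coe_mk, Real.dist_eq]
        rw [abs_sub_le_iff]
        constructor <;> nlinarith [hC x, hC y, hexp_nonneg x, hexp_nonneg y])
  have hφ : ∀ u, φ u = Real.exp (-g u) := fun u => rfl
  have hpe_meas : ∀ η : ℝ, 0 < η → Measurable (pe η) := by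
    intro η hη
    have hF : StronglyMeasurable fun q : EuclideanSpace ℝ (Fin M) × EuclideanSpace ℝ (Fin M) =>
        Real.exp (-g q.2) * k η q.1 q.2 := by
      refine Measurable.stronglyMeasurable ?_
      exact ((Real.continuous_exp.comp hg.neg).measurable.comp measurable_snd).mul (hkmeas η hη)
    have hI : Measurable fun v => ∫ u, Real.exp (-g u) * k η v u :=
      hF.integral_prod_right'.measurable
    have hrw : pe η = fun x => ef x * ∫ u, Real.exp (-g u) * k η (D x) u := funext (hpe η)
    rw [hrw]
    exact hef_meas.mul (hI.comp hDc.measurable)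
  have hpe_nonneg : ∀ η : ℝ, 0 < η → ∀ x, 0 ≤ pe η x := by
    intro η hη x
    rw [hpe]
    exact mul_nonneg (hef_nonneg x)
      (integral_nonneg fun u => mul_nonneg (hexp_nonneg u) (hknn η hη _ u))
  have hpe_le : ∀ η : ℝ, 0 < η → ∀ x, pe η x ≤ C * ef x := by
    intro η hη x
    rw [hpe, mul_comm C (ef x)]
    refine mul_le_mul_of_nonneg_left ?_ (hef_nonneg x)
    calc ∫ u, Real.exp (-g u) * k η (D x) u
        ≤ ∫ u, C * k η (D x) u := by
          refine integral_mono_of_nonneg ?_ ((hkint η hη (D x)).const_mul C) ?_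
          · filter_upwards with u
            exact mul_nonneg (hexp_nonneg u) (hknn η hη _ u)
          · filter_upwards with u
            exact mul_le_mul_of_nonneg_right (hC u) (hknn η hη _ u)
      _ = C := by rw [integral_const_mul, hkprob η hη (D x), mul_one]
  have hpe_int : ∀ η : ℝ, 0 < η → Integrable (pe η) := by
    intro η hη
    refine (hint.const_mul C).mono' (hpe_meas η hη).aestronglyMeasurable ?_
    filter_upwards with x
    rw [Real.norm_eq_abs, abs_of_nonneg (hpe_nonneg η hη x)]
    exact hpe_le η hη x
  have hpt : ∀ x, Tendsto (fun η => pe η x) (𝓝[>] (0:ℝ)) (𝓝 (p x)) := by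
    intro x
    have h1 : Tendsto (fun η => ∫ u, Real.exp (-g u) * k η (D x) u) (𝓝[>] (0:ℝ))
        (𝓝 (Real.exp (-g (D x)))) := hkweak (D x) φ
    have h2 := h1.const_mul (ef x)
    have he : (fun η => ef x * ∫ u, Real.exp (-g u) * k η (D x) u) = fun η => pe η x := by
      funext η; rw [hpe]
    rw [he, ← hp] at h2
    exact h2
  have hZs : Tendsto (fun η => ∫ x, pe η x) (𝓝[>] (0:ℝ)) (𝓝 Z) := by
    refine tendsto_integral_filter_of_dominated_convergence (fun x => C * ef x) ?_ ?_
      (hint.const_mul C) ?_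
    · filter_upwards [self_mem_nhdsWithin] with η hη
      exact (hpe_meas η hη).aestronglyMeasurable
    · filter_upwards [self_mem_nhdsWithin] with η hη
      filter_upwards with x
      rw [Real.norm_eq_abs, abs_of_nonneg (hpe_nonneg η hη x)]
      exact hpe_le η hη x
    · filter_upwards with x
      exact hpt x
  have hL1 : Tendsto (fun η => ∫ x, |p x - pe η x|) (𝓝[>] (0:ℝ)) (𝓝 0) := by
    have hmain : Tendsto (fun η => ∫ x, |p x - pe η x|) (𝓝[>] (0:ℝ))
        (𝓝 (∫ _x : EuclideanSpace ℝ (Fin N), (0:ℝ))) := by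
      refine tendsto_integral_filter_of_dominated_convergence (fun x => 2 * (C * ef x)) ?_ ?_
        ((hint.const_mul C).const_mul 2) ?_
      · filter_upwards [self_mem_nhdsWithin] with η hη
        exact ((hp_meas.sub (hpe_meas η hη)).abs).aestronglyMeasurable
      · filter_upwards [self_mem_nhdsWithin] with η hη
        filter_upwards with x
        rw [Real.norm_eq_abs, abs_abs, abs_le]
        have h1 := hp_le x
        have h2 := hpe_le η hη x
        have h3 := hp_nonneg x
        have h4 := hpe_nonneg η hη x
        constructor <;> linarith
      · filter_upwards with x
        have := (tendsto_const_nhds (x := p x) (f := 𝓝[>] (0:ℝ))).sub (hpt x)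
        simpa using this.abs
    simpa using hmain
  have hπA : ∀ A : Set (EuclideanSpace ℝ (Fin N)), MeasurableSet A →
      (π A).toReal = Z⁻¹ * ∫ x in A, p x := by
    intro A hA
    rw [hπ, Measure.smul_apply, smul_eq_mul, withDensity_apply _ hA,
      ← ofReal_integral_eq_lintegral_ofReal hp_int (Filter.Eventually.of_forall hp_nonneg),
      ← ofReal_integral_eq_lintegral_ofReal hp_int.integrableOn
        (Filter.Eventually.of_forall hp_nonneg),
      ← hZdef, ENNReal.toReal_mul, ENNReal.toReal_inv, ENNReal.toReal_ofReal hZnn,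
      ENNReal.toReal_ofReal (setIntegral_nonneg hA fun x _ => hp_nonneg x)]
  have hπeA : ∀ η : ℝ, 0 < η → ∀ A : Set (EuclideanSpace ℝ (Fin N)), MeasurableSet A →
      (πe η A).toReal = (∫ x, pe η x)⁻¹ * ∫ x in A, pe η x := by
    intro η hη A hA
    rw [hπe, Measure.smul_apply, smul_eq_mul, withDensity_apply _ hA,
      ← ofReal_integral_eq_lintegral_ofReal (hpe_int η hη)
        (Filter.Eventually.of_forall (hpe_nonneg η hη)),
      ← ofReal_integral_eq_lintegral_ofReal (hpe_int η hη).integrableOn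
        (Filter.Eventually.of_forall (hpe_nonneg η hη)),
      ENNReal.toReal_mul, ENNReal.toReal_inv,
      ENNReal.toReal_ofReal (integral_nonneg (hpe_nonneg η hη)),
      ENNReal.toReal_ofReal (setIntegral_nonneg hA fun x _ => hpe_nonneg η hη x)]
  have hBto : Tendsto (fun η => Z⁻¹ * (∫ x, |p x - pe η x|)
      + |Z⁻¹ - (∫ x, pe η x)⁻¹| * ∫ x, pe η x) (𝓝[>] (0:ℝ)) (𝓝 0) := by
    have t1 : Tendsto (fun η => Z⁻¹ * (∫ x, |p x - pe η x|)) (𝓝[>] (0:ℝ)) (𝓝 (Z⁻¹ * 0)) :=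
      hL1.const_mul _
    have t2 : Tendsto (fun η => (∫ x, pe η x)⁻¹) (𝓝[>] (0:ℝ)) (𝓝 Z⁻¹) :=
      hZs.inv₀ hZpos.ne'
    have t3 : Tendsto (fun η => |Z⁻¹ - (∫ x, pe η x)⁻¹| * ∫ x, pe η x) (𝓝[>] (0:ℝ))
        (𝓝 (|Z⁻¹ - Z⁻¹| * Z)) := ((tendsto_const_nhds.sub t2).abs).mul hZs
    have := t1.add t3
    simpa using this
  have hev : ∀ᶠ η in 𝓝[>] (0:ℝ), 0 < η ∧ Z/2 < ∫ x, pe η x := by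
    filter_upwards [self_mem_nhdsWithin,
      hZs.eventually (eventually_gt_nhds (by linarith : Z/2 < Z))] with η h1 h2
    exact ⟨h1, h2⟩
  haveI : Nonempty {A : Set (EuclideanSpace ℝ (Fin N)) // MeasurableSet A} :=
    ⟨⟨∅, MeasurableSet.empty⟩⟩
  refine squeeze_zero' ?_ ?_ hBto
  · filter_upwards with η
    exact Real.iSup_nonneg fun A => abs_nonneg _
  · filter_upwards [hev] with η hη
    obtain ⟨hη0, hZη⟩ := hη
    refine ciSup_le fun A => ?_
    obtain ⟨A, hA⟩ := A
    have hZηpos : 0 < ∫ x, pe η x := lt_of_le_of_lt (by linarith) hZη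
    rw [hπA A hA, hπeA η hη0 A hA]
    have e0 : |∫ x in A, (p x - pe η x)| ≤ ∫ x, |p x - pe η x| := by
      have e0a : |∫ x in A, (p x - pe η x)| ≤ ∫ x in A, |p x - pe η x| := by
        simpa [Real.norm_eq_abs] using
          norm_integral_le_integral_norm (μ := volume.restrict A) (fun x => p x - pe η x)
      refine e0a.trans (setIntegral_le_integral (hp_int.sub (hpe_int η hη0)).abs ?_)
      filter_upwards with x
      exact abs_nonneg _
    have e1 : |(∫ x in A, p x) - ∫ x in A, pe η x| ≤ ∫ x, |p x - pe η x| := by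
      rw [← integral_sub hp_int.integrableOn (hpe_int η hη0).integrableOn]
      exact e0
    have e2 : ∫ x in A, pe η x ≤ ∫ x, pe η x :=
      setIntegral_le_integral (hpe_int η hη0) (Filter.Eventually.of_forall (hpe_nonneg η hη0))
    have e3 : 0 ≤ ∫ x in A, pe η x := setIntegral_nonneg hA fun x _ => hpe_nonneg η hη0 x
    have key : Z⁻¹ * (∫ x in A, p x) - (∫ x, pe η x)⁻¹ * ∫ x in A, pe η x
        = Z⁻¹ * ((∫ x in A, p x) - ∫ x in A, pe η x)
          + (Z⁻¹ - (∫ x, pe η x)⁻¹) * ∫ x in A, pe η x := by ring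
    rw [key]
    calc |Z⁻¹ * ((∫ x in A, p x) - ∫ x in A, pe η x)
          + (Z⁻¹ - (∫ x, pe η x)⁻¹) * ∫ x in A, pe η x|
        ≤ |Z⁻¹ * ((∫ x in A, p x) - ∫ x in A, pe η x)|
          + |(Z⁻¹ - (∫ x, pe η x)⁻¹) * ∫ x in A, pe η x| := abs_add_le _ _
      _ = Z⁻¹ * |(∫ x in A, p x) - ∫ x in A, pe η x|
          + |Z⁻¹ - (∫ x, pe η x)⁻¹| * ∫ x in A, pe η x := by
          rw [abs_mul, abs_mul, abs_of_nonneg (inv_nonneg.mpr hZnn), abs_of_nonneg e3]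
      _ ≤ Z⁻¹ * (∫ x, |p x - pe η x|) + |Z⁻¹ - (∫ x, pe η x)⁻¹| * ∫ x, pe η x := by
          refine add_le_add ?_ ?_
          · exact mul_le_mul_of_nonneg_left e1 (inv_nonneg.mpr hZnn)
          · exact mul_le_mul_of_nonneg_left e2 (abs_nonneg _)
end

section
/- Let N, M ≥ 1, let D : ℝ^N → ℝ^M be linear, let h : ℝ^N → ℝ and f : ℝ^N → (−∞,+∞] be measurable with 0 < ∫_{ℝ^N} exp(−h(x)−f(x)) dx < ∞, and let g : ℝ^M → ℝ be continuous with exp(−g) bounded. Let π be the probability measure on ℝ^N with density proportional to x ↦ exp(−h(x)−f(x)−g(Dx)), and for η > 0 let π_η be the probability measure on ℝ^N with density proportional to x ↦ exp(−h(x)−f(x)) · (2πη²)^{−M/2} ∫_{ℝ^M} exp(−g(z)) exp(−‖Dx − z‖²/(2η²)) dz. Then ‖π − π_η‖_TV → 0 as η → 0⁺. -/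
/-!
Substituting `z = D x + η u` turns the smoothed factor into the average of `exp (-g)` over
`D x + η u` with `u` standard Gaussian. It is therefore bounded by `sup exp (-g)` and, `g` being
continuous, tends to `exp (-g (D x))` as `η → 0⁺`. Dominated convergence then gives `L¹`
convergence of the unnormalized densities, and normalizing is Lipschitz from `L¹` to total
variation, with constant `2 / ∫ p`, as long as the masses are positive.
-/

open MeasureTheory Filter Topology

section TotalVariation

variable {α : Type*} [MeasurableSpace α]

noncomputable def tvDist (μ ν : Measure α) : ℝ :=
  ⨆ A : {A : Set α // MeasurableSet A}, |(μ A.1).toReal - (ν A.1).toReal|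

noncomputable def normalizedWithDensity (μ : Measure α) (q : α → ℝ) : Measure α :=
  (∫⁻ x, ENNReal.ofReal (q x) ∂μ)⁻¹ • μ.withDensity fun x => ENNReal.ofReal (q x)

lemma tvDist_nonneg (μ ν : Measure α) : 0 ≤ tvDist μ ν :=
  Real.iSup_nonneg fun _ => abs_nonneg _

lemma tvDist_le {μ ν : Measure α} {c : ℝ}
    (h : ∀ A, MeasurableSet A → |(μ A).toReal - (ν A).toReal| ≤ c) : tvDist μ ν ≤ c :=
  have : Nonempty {A : Set α // MeasurableSet A} := ⟨⟨∅, .empty⟩⟩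
  ciSup_le fun A => h A.1 A.2

variable {μ : Measure α}

lemma toReal_normalizedWithDensity_apply {q : α → ℝ} (hq : Integrable q μ) (hq0 : 0 ≤ q)
    {A : Set α} (hA : MeasurableSet A) :
    (normalizedWithDensity μ q A).toReal = (∫ x in A, q x ∂μ) / ∫ x, q x ∂μ := by
  rw [normalizedWithDensity, Measure.smul_apply, smul_eq_mul, withDensity_apply _ hA,
    ← ofReal_integral_eq_lintegral_ofReal hq (.of_forall hq0),
    ← ofReal_integral_eq_lintegral_ofReal hq.integrableOn (ae_restrict_of_ae (.of_forall hq0)),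
    ENNReal.toReal_mul, ENNReal.toReal_inv, ENNReal.toReal_ofReal (integral_nonneg hq0),
    ENNReal.toReal_ofReal (setIntegral_nonneg hA fun x _ => hq0 x), div_eq_inv_mul]

lemma abs_div_sub_div_le {a b P Q L : ℝ} (hP : 0 < P) (hQ : 0 < Q) (hb : 0 ≤ b) (hbQ : b ≤ Q)
    (hab : |a - b| ≤ L) (hQP : |Q - P| ≤ L) : |a / P - b / Q| ≤ 2 / P * L := by
  have hsplit : a / P - b / Q = (a - b) / P + b / Q * ((Q - P) / P) := by
    field_simp
    ring
  calc |a / P - b / Q| ≤ |(a - b) / P| + |b / Q * ((Q - P) / P)| := hsplit ▸ abs_add_le _ _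
    _ = |a - b| / P + b / Q * (|Q - P| / P) := by
        rw [abs_mul, abs_div, abs_div, abs_div, abs_of_pos hP, abs_of_pos hQ, abs_of_nonneg hb]
    _ ≤ L / P + 1 * (L / P) := by
        gcongr
        exact (div_le_one hQ).2 hbQ
    _ = 2 / P * L := by ring

lemma tvDist_normalizedWithDensity_le {p q : α → ℝ} (hp : Integrable p μ) (hp0 : 0 ≤ p)
    (hq : Integrable q μ) (hq0 : 0 ≤ q) (hpos : 0 < ∫ x, p x ∂μ) (hqpos : 0 < ∫ x, q x ∂μ) :
    tvDist (normalizedWithDensity μ p) (normalizedWithDensity μ q) ≤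
      2 / (∫ x, p x ∂μ) * ∫ x, |q x - p x| ∂μ := by
  refine tvDist_le fun A hA => ?_
  rw [toReal_normalizedWithDensity_apply hp hp0 hA, toReal_normalizedWithDensity_apply hq hq0 hA]
  refine abs_div_sub_div_le hpos hqpos (setIntegral_nonneg hA fun x _ => hq0 x)
    (setIntegral_le_integral hq (.of_forall hq0)) ?_ ?_
  · calc |(∫ x in A, p x ∂μ) - ∫ x in A, q x ∂μ| = |∫ x in A, (q x - p x) ∂μ| := by
          rw [integral_sub hq.integrableOn hp.integrableOn, abs_sub_comm]
      _ ≤ ∫ x in A, |q x - p x| ∂μ := abs_integral_le_integral_abs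
      _ ≤ ∫ x, |q x - p x| ∂μ :=
          setIntegral_le_integral (hq.sub hp).abs (.of_forall fun _ => abs_nonneg _)
  · rw [← integral_sub hq hp]
    exact abs_integral_le_integral_abs

lemma tendsto_tvDist_normalizedWithDensity {ι : Type*} {l : Filter ι} {p : α → ℝ}
    {q : ι → α → ℝ} (hp : Integrable p μ) (hp0 : 0 ≤ p) (hpos : 0 < ∫ x, p x ∂μ)
    (hq : ∀ᶠ i in l, Integrable (q i) μ ∧ 0 ≤ q i)
    (hL1 : Tendsto (fun i => ∫ x, |q i x - p x| ∂μ) l (𝓝 0)) :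
    Tendsto (fun i => tvDist (normalizedWithDensity μ p) (normalizedWithDensity μ (q i)))
      l (𝓝 0) := by
  have hmass : Tendsto (fun i => ∫ x, q i x ∂μ) l (𝓝 (∫ x, p x ∂μ)) := by
    refine tendsto_iff_norm_sub_tendsto_zero.2 (squeeze_zero' (.of_forall fun _ => norm_nonneg _)
      ?_ hL1)
    filter_upwards [hq] with i hi
    rw [← integral_sub hi.1 hp]
    exact abs_integral_le_integral_abs
  have hbound := by simpa using hL1.const_mul (2 / ∫ x, p x ∂μ)
  refine squeeze_zero' (.of_forall fun _ => tvDist_nonneg _ _) ?_ hbound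
  filter_upwards [hq, hmass.eventually_const_lt hpos] with i hi hqpos
  exact tvDist_normalizedWithDensity_le hp hp0 hi.1 hi.2 hpos hqpos

end TotalVariation

lemma tendsto_integral_abs_mul_sub_mul {α ι : Type*} [MeasurableSpace α] {μ : Measure α}
    {l : Filter ι} [l.IsCountablyGenerated] {w k₀ : α → ℝ} {k : ι → α → ℝ} {C : ℝ}
    (hw : Integrable w μ) (hk : ∀ᶠ i in l, AEStronglyMeasurable (k i) μ ∧ ∀ x, ‖k i x‖ ≤ C)
    (hk₀ : AEStronglyMeasurable k₀ μ) (hk₀C : ∀ x, ‖k₀ x‖ ≤ C)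
    (hlim : ∀ x, Tendsto (fun i => k i x) l (𝓝 (k₀ x))) :
    Tendsto (fun i => ∫ x, |w x * k i x - w x * k₀ x| ∂μ) l (𝓝 0) := by
  have h := tendsto_integral_filter_of_dominated_convergence (fun x => 2 * C * ‖w x‖)
    (F := fun i x => |w x * k i x - w x * k₀ x|)
    (hk.mono fun i hi => ((hw.aestronglyMeasurable.mul hi.1).sub
      (hw.aestronglyMeasurable.mul hk₀)).norm)
    (hk.mono fun i hi => .of_forall fun x =>
      calc ‖|w x * k i x - w x * k₀ x|‖ = ‖w x‖ * ‖k i x - k₀ x‖ := by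
            rw [Real.norm_eq_abs, abs_abs, ← mul_sub, ← Real.norm_eq_abs, norm_mul]
        _ ≤ ‖w x‖ * (C + C) := by
            gcongr
            exact (norm_sub_le _ _).trans (add_le_add (hi.2 x) (hk₀C x))
        _ = 2 * C * ‖w x‖ := by ring)
    (hw.norm.const_mul _)
    (.of_forall fun x => ((tendsto_const_nhds.mul (hlim x)).sub tendsto_const_nhds).abs)
  simpa using h

section GaussianSmoothing

open Real Module

variable {V : Type*} [NormedAddCommGroup V] [InnerProductSpace ℝ V] [FiniteDimensional ℝ V]
  [MeasurableSpace V] [BorelSpace V]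

lemma integral_exp_neg_sq_norm_div_two :
    ∫ u : V, rexp (-‖u‖ ^ 2 / 2) = (2 * π) ^ ((finrank ℝ V : ℝ) / 2) := by
  have h := GaussianFourier.integral_rexp_neg_mul_sq_norm (V := V) (b := 1 / 2) one_half_pos
  simp_rw [neg_div, ← one_div_mul_eq_div _ (_ ^ 2), ← neg_mul, h]
  norm_num [div_div_eq_mul_div, mul_comm]

lemma integrable_exp_neg_sq_norm_div_two : Integrable fun u : V => rexp (-‖u‖ ^ 2 / 2) :=
  .of_integral_ne_zero (by rw [integral_exp_neg_sq_norm_div_two]; positivity)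

noncomputable def gaussConv (φ : V → ℝ) (η : ℝ) (y : V) : ℝ :=
  (2 * π * η ^ 2) ^ (-(finrank ℝ V : ℝ) / 2) * ∫ z, φ z * rexp (-‖y - z‖ ^ 2 / (2 * η ^ 2))

lemma gaussConv_nonneg {φ : V → ℝ} (hφ : 0 ≤ φ) (η : ℝ) (y : V) : 0 ≤ gaussConv φ η y :=
  mul_nonneg (rpow_nonneg (by positivity) _)
    (integral_nonneg fun z => mul_nonneg (hφ z) (exp_nonneg _))

lemma gaussConv_eq_integral_add_smul (φ : V → ℝ) {η : ℝ} (hη : 0 < η) (y : V) :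
    gaussConv φ η y =
      (2 * π) ^ (-(finrank ℝ V : ℝ) / 2) * ∫ u, φ (y + η • u) * rexp (-‖u‖ ^ 2 / 2) := by
  have htranslate : ∫ z, φ z * rexp (-‖y - z‖ ^ 2 / (2 * η ^ 2))
      = ∫ z, φ (y + z) * rexp (-‖z‖ ^ 2 / (2 * η ^ 2)) := by
    rw [← integral_add_left_eq_self _ y]
    simp only [sub_add_cancel_left, norm_neg]
  have hscale := Measure.integral_comp_smul_of_nonneg volume
    (fun z => φ (y + z) * rexp (-‖z‖ ^ 2 / (2 * η ^ 2))) η (hR := hη.le)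
  have hexp : ∀ u : V, -‖η • u‖ ^ 2 / (2 * η ^ 2) = -‖u‖ ^ 2 / 2 := fun u => by
    rw [norm_smul, norm_eq_abs, mul_pow, sq_abs]
    field_simp
  simp only [hexp, smul_eq_mul] at hscale
  have hcoef : (η ^ 2) ^ (-(finrank ℝ V : ℝ) / 2) = (η ^ finrank ℝ V)⁻¹ := by
    rw [neg_div, rpow_neg (by positivity), ← rpow_natCast η 2, ← rpow_mul hη.le, ← rpow_natCast,
      Nat.cast_ofNat, mul_div_cancel₀ _ two_ne_zero]
  rw [gaussConv, htranslate, hscale, mul_rpow (by positivity) (by positivity), hcoef, mul_assoc]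

variable {φ : V → ℝ} {C : ℝ}

lemma continuous_integral_add_smul_mul_gaussian (hφ : Continuous φ) (hφC : ∀ z, ‖φ z‖ ≤ C) :
    Continuous fun ηy : ℝ × V => ∫ u, φ (ηy.2 + ηy.1 • u) * rexp (-‖u‖ ^ 2 / 2) := by
  refine continuous_of_dominated (bound := fun u => C * rexp (-‖u‖ ^ 2 / 2))
    (fun _ => (by fun_prop : Continuous _).aestronglyMeasurable)
    (fun _ => .of_forall fun u => ?_) (integrable_exp_neg_sq_norm_div_two.const_mul C)
    (.of_forall fun u => by fun_prop)
  rw [norm_mul, norm_of_nonneg (exp_nonneg _)]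
  exact mul_le_mul_of_nonneg_right (hφC _) (exp_nonneg _)

lemma norm_gaussConv_le (hφC : ∀ z, ‖φ z‖ ≤ C) {η : ℝ} (hη : 0 < η) (y : V) :
    ‖gaussConv φ η y‖ ≤ C := by
  have hmass : (2 * π) ^ (-(finrank ℝ V : ℝ) / 2) * ∫ u : V, rexp (-‖u‖ ^ 2 / 2) = 1 := by
    rw [integral_exp_neg_sq_norm_div_two, neg_div, rpow_neg (by positivity),
      inv_mul_cancel₀ (by positivity)]
  have hnorm : ‖∫ u, φ (y + η • u) * rexp (-‖u‖ ^ 2 / 2)‖ ≤ ∫ u : V, C * rexp (-‖u‖ ^ 2 / 2) := by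
    refine norm_integral_le_of_norm_le (integrable_exp_neg_sq_norm_div_two.const_mul C)
      (.of_forall fun u => ?_)
    rw [norm_mul, norm_of_nonneg (exp_nonneg _)]
    exact mul_le_mul_of_nonneg_right (hφC _) (exp_nonneg _)
  rw [gaussConv_eq_integral_add_smul φ hη, norm_mul, norm_of_nonneg (by positivity)]
  calc _ ≤ (2 * π) ^ (-(finrank ℝ V : ℝ) / 2) * ∫ u : V, C * rexp (-‖u‖ ^ 2 / 2) := by gcongr
    _ = C := by rw [integral_const_mul, mul_left_comm, hmass, mul_one]

lemma continuous_gaussConv (hφ : Continuous φ) (hφC : ∀ z, ‖φ z‖ ≤ C) {η : ℝ} (hη : 0 < η) :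
    Continuous (gaussConv φ η) := by
  simp_rw [funext (gaussConv_eq_integral_add_smul φ hη)]
  exact continuous_const.mul
    ((continuous_integral_add_smul_mul_gaussian hφ hφC).comp (Continuous.prodMk_right η))

lemma tendsto_gaussConv (hφ : Continuous φ) (hφC : ∀ z, ‖φ z‖ ≤ C) (y : V) :
    Tendsto (fun η => gaussConv φ η y) (𝓝[>] 0) (𝓝 (φ y)) := by
  have hlim : Tendsto (fun η : ℝ => ∫ u, φ (y + η • u) * rexp (-‖u‖ ^ 2 / 2)) (𝓝 0)
      (𝓝 (φ y * (2 * π) ^ ((finrank ℝ V : ℝ) / 2))) := by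
    have := ((continuous_integral_add_smul_mul_gaussian hφ hφC).comp
      (Continuous.prodMk_left y)).tendsto 0
    simpa [Function.comp_def, integral_const_mul, integral_exp_neg_sq_norm_div_two] using this
  have hval : (2 * π) ^ (-(finrank ℝ V : ℝ) / 2) * (φ y * (2 * π) ^ ((finrank ℝ V : ℝ) / 2))
      = φ y := by
    rw [mul_left_comm, ← rpow_add (by positivity), neg_div, neg_add_cancel, rpow_zero, mul_one]
  rw [← hval]
  refine ((hlim.const_mul _).mono_left nhdsWithin_le_nhds).congr' ?_
  filter_upwards [self_mem_nhdsWithin] with η hη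
  exact (gaussConv_eq_integral_add_smul φ hη y).symm

end GaussianSmoothing

theorem stmt6_general (N M : ℕ)
    (D : EuclideanSpace ℝ (Fin N) →ₗ[ℝ] EuclideanSpace ℝ (Fin M))
    (h : EuclideanSpace ℝ (Fin N) → ℝ)
    (f : EuclideanSpace ℝ (Fin N) → EReal)
    (ef : EuclideanSpace ℝ (Fin N) → ℝ)
    (hef : ∀ x, ef x = Real.exp (-h x) *
      (if f x = ⊤ then 0 else Real.exp (-(f x).toReal)))
    (hint : Integrable ef) (hpos : 0 < ∫ x, ef x)
    (g : EuclideanSpace ℝ (Fin M) → ℝ) (hg : Continuous g)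
    (hgb : ∃ C, ∀ z, Real.exp (-g z) ≤ C)
    (p : EuclideanSpace ℝ (Fin N) → ℝ)
    (hp : ∀ x, p x = ef x * Real.exp (-g (D x)))
    (pe : ℝ → EuclideanSpace ℝ (Fin N) → ℝ)
    (hpe : ∀ η x, pe η x = ef x * ((2 * Real.pi * η ^ 2) ^ (-(M : ℝ) / 2) *
        ∫ z, Real.exp (-g z) * Real.exp (-‖D x - z‖ ^ 2 / (2 * η ^ 2))))
    (π : Measure (EuclideanSpace ℝ (Fin N)))
    (hπ : π = (∫⁻ x, ENNReal.ofReal (p x))⁻¹ •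
        volume.withDensity fun x => ENNReal.ofReal (p x))
    (πe : ℝ → Measure (EuclideanSpace ℝ (Fin N)))
    (hπe : ∀ η, πe η = (∫⁻ x, ENNReal.ofReal (pe η x))⁻¹ •
        volume.withDensity fun x => ENNReal.ofReal (pe η x)) :
    Tendsto (fun η => ⨆ A : {A : Set (EuclideanSpace ℝ (Fin N)) // MeasurableSet A},
        |(π A.1).toReal - (πe η A.1).toReal|)
      (nhdsWithin 0 (Set.Ioi 0)) (nhds 0) := by
  obtain ⟨C, hC⟩ := hgb
  set φ := fun z => Real.exp (-g z)
  have hφ : Continuous φ := by fun_prop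
  have hφC : ∀ z, ‖φ z‖ ≤ C := fun z => (Real.norm_of_nonneg (Real.exp_nonneg _)).trans_le (hC z)
  have hD : Continuous D := D.continuous_of_finiteDimensional
  have hef0 : 0 ≤ ef := fun x => by rw [hef]; split_ifs <;> positivity
  obtain rfl : p = fun x => ef x * φ (D x) := funext hp
  obtain rfl : pe = fun η x => ef x * gaussConv φ η (D x) := by
    ext η x
    simp only [hpe, gaussConv, finrank_euclideanSpace_fin, φ]
  obtain rfl := funext hπe
  subst hπ
  have hp_int : Integrable fun x => ef x * φ (D x) :=
    hint.mul_bdd (hφ.comp hD).aestronglyMeasurable (.of_forall fun x => hφC (D x))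
  have hp0 : 0 ≤ fun x => ef x * φ (D x) := fun x => mul_nonneg (hef0 x) (Real.exp_nonneg _)
  refine tendsto_tvDist_normalizedWithDensity (μ := volume) hp_int hp0 ?_ ?_
    (tendsto_integral_abs_mul_sub_mul hint ?_ (hφ.comp hD).aestronglyMeasurable
      (fun x => hφC (D x)) fun x => tendsto_gaussConv hφ hφC (D x))
  · have hsupp : Function.support (fun x => ef x * φ (D x)) = Function.support ef := by
      ext x
      simp [φ, Real.exp_ne_zero]
    rwa [integral_pos_iff_support_of_nonneg hp0 hp_int, hsupp,
      ← integral_pos_iff_support_of_nonneg hef0 hint]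
  · filter_upwards [self_mem_nhdsWithin] with η hη
    exact ⟨hint.mul_bdd ((continuous_gaussConv hφ hφC hη).comp hD).aestronglyMeasurable
        (.of_forall fun x => norm_gaussConv_le hφC hη (D x)),
      fun x => mul_nonneg (hef0 x) (gaussConv_nonneg (fun z => Real.exp_nonneg _) η (D x))⟩
  · filter_upwards [self_mem_nhdsWithin] with η hη
    exact ⟨((continuous_gaussConv hφ hφC hη).comp hD).aestronglyMeasurable,
      fun x => norm_gaussConv_le hφC hη (D x)⟩

/-- AXDA marginal convergence for the quadratic coupling (Proposition 2.1 with
`φ_α, ψ_β` quadratic and `η² = α² + β²`): the measure `π_η` with density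
proportional to `exp(−h−f) (2πη²)^{−M/2} ∫ exp(−g(z)) exp(−‖Dx−z‖²/(2η²)) dz`
converges to `π` (density proportional to `exp(−h−f−g∘D)`) in total variation
as `η → 0⁺`. `f` takes values in `(−∞,∞]`, encoded as an `EReal`-valued function
never equal to `⊥`, with `exp(−f(x))` interpreted as `0` when `f(x) = ⊤`. -/
theorem stmt6 (N M : ℕ) (hN : 1 ≤ N) (hM : 1 ≤ M)
    (D : EuclideanSpace ℝ (Fin N) →ₗ[ℝ] EuclideanSpace ℝ (Fin M))
    (h : EuclideanSpace ℝ (Fin N) → ℝ) (hh : Measurable h)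
    (f : EuclideanSpace ℝ (Fin N) → EReal) (hf : Measurable f)
    (hfbot : ∀ x, f x ≠ ⊥)
    (ef : EuclideanSpace ℝ (Fin N) → ℝ)
    (hef : ∀ x, ef x = Real.exp (-h x) *
      (if f x = ⊤ then 0 else Real.exp (-(f x).toReal)))
    (hint : Integrable ef) (hpos : 0 < ∫ x, ef x)
    (g : EuclideanSpace ℝ (Fin M) → ℝ) (hg : Continuous g)
    (hgb : ∃ C, ∀ z, Real.exp (-g z) ≤ C)
    (p : EuclideanSpace ℝ (Fin N) → ℝ)
    (hp : ∀ x, p x = ef x * Real.exp (-g (D x)))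
    (pe : ℝ → EuclideanSpace ℝ (Fin N) → ℝ)
    (hpe : ∀ η x, pe η x = ef x * ((2 * Real.pi * η ^ 2) ^ (-(M : ℝ) / 2) *
        ∫ z, Real.exp (-g z) * Real.exp (-‖D x - z‖ ^ 2 / (2 * η ^ 2))))
    (π : Measure (EuclideanSpace ℝ (Fin N)))
    (hπ : π = (∫⁻ x, ENNReal.ofReal (p x))⁻¹ •
        volume.withDensity fun x => ENNReal.ofReal (p x))
    (πe : ℝ → Measure (EuclideanSpace ℝ (Fin N)))
    (hπe : ∀ η, πe η = (∫⁻ x, ENNReal.ofReal (pe η x))⁻¹ •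
        volume.withDensity fun x => ENNReal.ofReal (pe η x)) :
    Tendsto (fun η => ⨆ A : {A : Set (EuclideanSpace ℝ (Fin N)) // MeasurableSet A},
        |(π A.1).toReal - (πe η A.1).toReal|)
      (nhdsWithin 0 (Set.Ioi 0)) (nhds 0) :=
  stmt6_general N M D h f ef hef hint hpos g hg hgb p hp pe hpe π hπ πe hπe
end

section
/- Let I ≥ 1, M_i ≥ 1, let g_i : ℝ^{M_i} → (−∞,+∞] be measurable, let α_i, β_i > 0 with η_i² = α_i² + β_i², and let w_i ∈ ℝ^{M_i} for i ∈ {1,…,I}. Then, as an equality in [0,+∞], ∫_{∏_i (ℝ^{M_i} × ℝ^{M_i})} exp(−∑_{i=1}^I [ g_i(z_i) + ‖w_i − z_i + u_i‖²/(2α_i²) + ‖u_i‖²/(2β_i²) ]) d(z,u) = ∏_{i=1}^I (2π α_i²β_i²/(α_i²+β_i²))^{M_i/2} · ∏_{i=1}^I ∫_{ℝ^{M_i}} exp(−g_i(z_i) − ‖w_i − z_i‖²/(2η_i²)) dz_i. -/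
/-!
Completing the square in `u` turns the `u`-integral into a translated Gaussian integral, which
leaves the constant `(2π α²β²/(α²+β²))^(M/2)` times a Gaussian of variance `α² + β²` in
`w − z`: the convolution of two centred Gaussians is a Gaussian whose variance is the sum. The
joint integrand is a product over the blocks `i`, so Tonelli's theorem on the finite product
splits the integral into the per-block integrals.
-/

open MeasureTheory Real

namespace MeasureTheory

theorem lintegral_fin_nat_prod_eq_prod {n : ℕ} {E : Fin n → Type*}
    {mE : ∀ i, MeasurableSpace (E i)} {μ : (i : Fin n) → Measure (E i)} [∀ i, SigmaFinite (μ i)]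
    {f : (i : Fin n) → E i → ENNReal} (hf : ∀ i, Measurable (f i)) :
    ∫⁻ x : (i : Fin n) → E i, ∏ i, f i (x i) ∂(Measure.pi μ) = ∏ i, ∫⁻ x, f i x ∂(μ i) := by
  induction n with
  | zero => simp [Measure.pi_empty_univ]
  | succ n ih =>
    have hrest : Measurable fun y : (j : Fin n) → E j.succ => ∏ j, f j.succ (y j) :=
      Finset.measurable_prod _ fun j _ => (hf j.succ).comp (measurable_pi_apply j)
    rw [← ((measurePreserving_piFinSuccAbove μ 0).symm).map_eq, lintegral_map_equiv]
    simp_rw [MeasurableEquiv.piFinSuccAbove_symm_apply, Fin.insertNthEquiv,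
      Fin.prod_univ_succ, Fin.insertNth_zero, Equiv.coe_fn_mk, Fin.cons_succ,
      Fin.zero_succAbove, Fin.cons_zero]
    have hsplit := lintegral_prod_mul (μ := μ 0) (ν := Measure.pi fun j => μ j.succ)
      (hf 0).aemeasurable hrest.aemeasurable
    -- the goal has `E (Fin.succAbove 0 j)` where `hsplit` has `E j.succ`: equal only up to defeq
    exact hsplit.trans (by rw [ih fun j => hf j.succ])

end MeasureTheory

section Gaussian

variable {V : Type*} [NormedAddCommGroup V] [InnerProductSpace ℝ V]

theorem norm_add_sq_div_add_norm_sq_div {α β : ℝ} (hα : α ≠ 0) (hβ : β ≠ 0) (c u : V) :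
    ‖c + u‖ ^ 2 / (2 * α ^ 2) + ‖u‖ ^ 2 / (2 * β ^ 2)
      = ‖c‖ ^ 2 / (2 * (α ^ 2 + β ^ 2))
        + (α ^ 2 + β ^ 2) / (2 * α ^ 2 * β ^ 2) * ‖u + (β ^ 2 / (α ^ 2 + β ^ 2)) • c‖ ^ 2 := by
  have hαβ : α ^ 2 + β ^ 2 ≠ 0 := by positivity
  rw [norm_add_sq_real, norm_add_sq_real, real_inner_smul_right, norm_smul, mul_pow,
    Real.norm_eq_abs, sq_abs, real_inner_comm]
  field_simp
  ring

variable [FiniteDimensional ℝ V] [MeasurableSpace V] [BorelSpace V]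

theorem lintegral_ofReal_exp_neg_mul_sq_norm {b : ℝ} (hb : 0 < b) :
    ∫⁻ v : V, ENNReal.ofReal (exp (-b * ‖v‖ ^ 2))
      = ENNReal.ofReal ((π / b) ^ (Module.finrank ℝ V / 2 : ℝ)) := by
  have hval := GaussianFourier.integral_rexp_neg_mul_sq_norm (V := V) hb
  -- the integral is positive, hence not the junk value of a non-integrable function
  have hint : Integrable fun v : V => exp (-b * ‖v‖ ^ 2) :=
    Integrable.of_integral_ne_zero (by rw [hval]; positivity)
  rw [← ofReal_integral_eq_lintegral_ofReal hint (.of_forall fun v => (exp_pos _).le), hval]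

theorem lintegral_gaussian_convolution {α β : ℝ} (hα : α ≠ 0) (hβ : β ≠ 0) (c : V) :
    ∫⁻ u : V, ENNReal.ofReal (exp (-(‖c + u‖ ^ 2 / (2 * α ^ 2) + ‖u‖ ^ 2 / (2 * β ^ 2))))
      = ENNReal.ofReal
          ((2 * π * α ^ 2 * β ^ 2 / (α ^ 2 + β ^ 2)) ^ (Module.finrank ℝ V / 2 : ℝ)) *
        ENNReal.ofReal (exp (-‖c‖ ^ 2 / (2 * (α ^ 2 + β ^ 2)))) := by
  have hαβ : α ^ 2 + β ^ 2 ≠ 0 := by positivity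
  set b := (α ^ 2 + β ^ 2) / (2 * α ^ 2 * β ^ 2)
  have hb : 0 < b := by positivity
  have hπb : π / b = 2 * π * α ^ 2 * β ^ 2 / (α ^ 2 + β ^ 2) := by
    simp only [b]
    field_simp
  simp_rw [norm_add_sq_div_add_norm_sq_div hα hβ c, neg_add, exp_add, neg_div,
    ENNReal.ofReal_mul (exp_pos _).le]
  rw [lintegral_const_mul' _ _ ENNReal.ofReal_ne_top, mul_comm,
    lintegral_add_right_eq_self (fun u => ENNReal.ofReal (exp (-(b * ‖u‖ ^ 2)))),
    ← hπb, ← lintegral_ofReal_exp_neg_mul_sq_norm hb]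
  simp only [neg_mul]

theorem lintegral_prod_mul_gaussian_convolution {G : V → ℝ} (hG : Measurable G)
    {α β : ℝ} (hα : α ≠ 0) (hβ : β ≠ 0) (w : V) :
    ∫⁻ q : V × V,
        ENNReal.ofReal (G q.1 * exp (-(‖w - q.1 + q.2‖ ^ 2 / (2 * α ^ 2)
          + ‖q.2‖ ^ 2 / (2 * β ^ 2))))
      = ENNReal.ofReal
          ((2 * π * α ^ 2 * β ^ 2 / (α ^ 2 + β ^ 2)) ^ (Module.finrank ℝ V / 2 : ℝ)) *
        ∫⁻ z : V, ENNReal.ofReal (G z * exp (-‖w - z‖ ^ 2 / (2 * (α ^ 2 + β ^ 2)))) := by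
  have hmeas : Measurable fun q : V × V => ENNReal.ofReal (G q.1 *
      exp (-(‖w - q.1 + q.2‖ ^ 2 / (2 * α ^ 2) + ‖q.2‖ ^ 2 / (2 * β ^ 2)))) :=
    ENNReal.measurable_ofReal.comp ((hG.comp measurable_fst).mul (by fun_prop))
  rw [Measure.volume_eq_prod, lintegral_prod _ hmeas.aemeasurable,
    ← lintegral_const_mul' _ _ ENNReal.ofReal_ne_top]
  refine lintegral_congr fun z => ?_
  simp_rw [ENNReal.ofReal_mul' (exp_pos _).le]
  rw [lintegral_const_mul' _ _ ENNReal.ofReal_ne_top, lintegral_gaussian_convolution hα hβ]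
  ring

end Gaussian

theorem ENNReal.ofReal_prod_mul_exp_neg_sum {ι : Type*} (s : Finset ι) {a : ι → ℝ}
    (ha : ∀ i ∈ s, 0 ≤ a i) (b : ι → ℝ) :
    ENNReal.ofReal ((∏ i ∈ s, a i) * exp (-∑ i ∈ s, b i))
      = ∏ i ∈ s, ENNReal.ofReal (a i * exp (-b i)) := by
  rw [← Finset.sum_neg_distrib, exp_sum, ← Finset.prod_mul_distrib]
  exact ENNReal.ofReal_prod_of_nonneg fun i hi => mul_nonneg (ha i hi) (exp_pos _).le

theorem stmt18_general (I : ℕ) (Mi : Fin I → ℕ)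
    (g : ∀ i, EuclideanSpace ℝ (Fin (Mi i)) → EReal)
    (hg : ∀ i, Measurable (g i))
    (α β η : Fin I → ℝ) (hα : ∀ i, 0 < α i) (hβ : ∀ i, 0 < β i)
    (hη2 : ∀ i, η i ^ 2 = α i ^ 2 + β i ^ 2)
    (w : ∀ i, EuclideanSpace ℝ (Fin (Mi i)))
    (expg : ∀ i, EuclideanSpace ℝ (Fin (Mi i)) → ℝ)
    (hexpg : ∀ i z, expg i z = if g i z = ⊤ then 0 else Real.exp (-(g i z).toReal)) :
    (∫⁻ p : ∀ i, EuclideanSpace ℝ (Fin (Mi i)) × EuclideanSpace ℝ (Fin (Mi i)),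
        ENNReal.ofReal ((∏ i, expg i (p i).1) *
          Real.exp (-∑ i, (‖w i - (p i).1 + (p i).2‖ ^ 2 / (2 * α i ^ 2)
            + ‖(p i).2‖ ^ 2 / (2 * β i ^ 2)))))
      = (∏ i, ENNReal.ofReal
            ((2 * Real.pi * α i ^ 2 * β i ^ 2 / (α i ^ 2 + β i ^ 2)) ^ ((Mi i : ℝ) / 2))) *
        ∏ i, ∫⁻ z : EuclideanSpace ℝ (Fin (Mi i)),
          ENNReal.ofReal (expg i z * Real.exp (-‖w i - z‖ ^ 2 / (2 * η i ^ 2))) := by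
  have hexpg_nonneg : ∀ i z, 0 ≤ expg i z := fun i z => by
    rw [hexpg]; split_ifs <;> positivity
  have hexpg_meas : ∀ i, Measurable (expg i) := fun i => by
    rw [funext (hexpg i)]
    exact Measurable.ite (hg i (measurableSet_singleton ⊤)) measurable_const
      (measurable_exp.comp (hg i).ereal_toReal.neg)
  have hblock_meas : ∀ i, Measurable fun q : EuclideanSpace ℝ (Fin (Mi i)) × _ =>
      ENNReal.ofReal (expg i q.1 * Real.exp (-(‖w i - q.1 + q.2‖ ^ 2 / (2 * α i ^ 2)
        + ‖q.2‖ ^ 2 / (2 * β i ^ 2)))) := fun i =>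
    ENNReal.measurable_ofReal.comp (((hexpg_meas i).comp measurable_fst).mul (by fun_prop))
  simp_rw [ENNReal.ofReal_prod_mul_exp_neg_sum _ (fun i _ => hexpg_nonneg i _)]
  rw [volume_pi, lintegral_fin_nat_prod_eq_prod hblock_meas, ← Finset.prod_mul_distrib]
  refine Finset.prod_congr rfl fun i _ => ?_
  rw [hη2, lintegral_prod_mul_gaussian_convolution (hexpg_meas i) (hα i).ne' (hβ i).ne',
    finrank_euclideanSpace_fin]

/-- Multi-term AXDA marginalization identity: the auxiliary variables `(z_i, u_i)` of
the multi-term quadratic coupling integrate out to independent Gaussian smoothings at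
scales `η_i` with `η_i² = α_i² + β_i²`, as an equality in `[0,∞]`. Each `g_i` is
valued in `(−∞,∞]` (encoded in `EReal` without the value `⊥`), with `exp(−g_i(z))`
interpreted as `0` when `g_i(z) = ⊤`. -/
theorem stmt18 (I : ℕ) (hI : 1 ≤ I) (Mi : Fin I → ℕ) (hMi : ∀ i, 1 ≤ Mi i)
    (g : ∀ i, EuclideanSpace ℝ (Fin (Mi i)) → EReal)
    (hg : ∀ i, Measurable (g i)) (hgbot : ∀ i z, g i z ≠ ⊥)
    (α β η : Fin I → ℝ) (hα : ∀ i, 0 < α i) (hβ : ∀ i, 0 < β i)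
    (hη : ∀ i, 0 < η i) (hη2 : ∀ i, η i ^ 2 = α i ^ 2 + β i ^ 2)
    (w : ∀ i, EuclideanSpace ℝ (Fin (Mi i)))
    (expg : ∀ i, EuclideanSpace ℝ (Fin (Mi i)) → ℝ)
    (hexpg : ∀ i z, expg i z = if g i z = ⊤ then 0 else Real.exp (-(g i z).toReal)) :
    (∫⁻ p : ∀ i, EuclideanSpace ℝ (Fin (Mi i)) × EuclideanSpace ℝ (Fin (Mi i)),
        ENNReal.ofReal ((∏ i, expg i (p i).1) *
          Real.exp (-∑ i, (‖w i - (p i).1 + (p i).2‖ ^ 2 / (2 * α i ^ 2)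
            + ‖(p i).2‖ ^ 2 / (2 * β i ^ 2)))))
      = (∏ i, ENNReal.ofReal
            ((2 * Real.pi * α i ^ 2 * β i ^ 2 / (α i ^ 2 + β i ^ 2)) ^ ((Mi i : ℝ) / 2))) *
        ∏ i, ∫⁻ z : EuclideanSpace ℝ (Fin (Mi i)),
          ENNReal.ofReal (expg i z * Real.exp (-‖w i - z‖ ^ 2 / (2 * η i ^ 2))) :=
  stmt18_general I Mi g hg α β η hα hβ hη2 w expg hexpg
end
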